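/- For any nonnegative real sequence (a_k) and any n ∈ ℕ, the discrete Hardy inequality holds: ∑_{k=1}^n (1/k²)(∑_{j=1}^k a_j)² ≤ 4 ∑_{k=1}^n a_k². -/

import Mathlib

/-!
Let `A k = (a 1 + ⋯ + a k) / k`. From `k A k = (k - 1) A (k - 1) + a k` one gets
`2 a k A k - A k ^ 2 = k A k ^ 2 - (k - 1) A (k - 1) ^ 2 + (k - 1) (A k - A (k - 1)) ^ 2`, which
telescopes to `∑ A k ^ 2 ≤ 2 ∑ a k A k`. Cauchy–Schwarz bounds the right side by
`2 (∑ a k ^ 2) ^ (1/2) (∑ A k ^ 2) ^ (1/2)`, whence `∑ A k ^ 2 ≤ 4 ∑ a k ^ 2`.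
-/

open Finset

noncomputable def partialAvg (a : ℕ → ℝ) (k : ℕ) : ℝ := (∑ j ∈ Icc 1 k, a j) / k

namespace partialAvg

variable (a : ℕ → ℝ)

theorem natCast_mul (k : ℕ) : (k : ℝ) * partialAvg a k = ∑ j ∈ Icc 1 k, a j := by
  rcases Nat.eq_zero_or_pos k with rfl | hk
  · simp
  · exact mul_div_cancel₀ _ (Nat.cast_ne_zero.mpr hk.ne')

theorem succ_mul_succ (k : ℕ) :
    ((k : ℝ) + 1) * partialAvg a (k + 1) = k * partialAvg a k + a (k + 1) := by
  rw [← Nat.cast_succ, natCast_mul, natCast_mul, sum_Icc_succ_top (by omega)]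

theorem sum_sq_add_le (n : ℕ) :
    ∑ k ∈ Icc 1 n, partialAvg a k ^ 2 + n * partialAvg a n ^ 2
      ≤ 2 * ∑ k ∈ Icc 1 n, a k * partialAvg a k := by
  induction n with
  | zero => simp
  | succ n ih =>
    rw [sum_Icc_succ_top (by omega), sum_Icc_succ_top (by omega), Nat.cast_succ]
    set A := partialAvg a n
    set A' := partialAvg a (n + 1)
    have hterm : a (n + 1) * A' = (n + 1) * A' ^ 2 - n * A * A' := by
      linear_combination A' * (succ_mul_succ a n).symm
    have hgap : 0 ≤ (n : ℝ) * (A' - A) ^ 2 := by positivity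
    linear_combination ih + hgap - 2 * hterm

theorem sum_sq_le (n : ℕ) :
    ∑ k ∈ Icc 1 n, partialAvg a k ^ 2 ≤ 2 * ∑ k ∈ Icc 1 n, a k * partialAvg a k := by
  have := sum_sq_add_le a n
  have : 0 ≤ (n : ℝ) * partialAvg a n ^ 2 := by positivity
  linarith

end partialAvg

theorem sum_sq_le_four_mul_of_sum_sq_le_two_mul_sum_mul {ι : Type*} (s : Finset ι)
    (f g : ι → ℝ) (h : ∑ i ∈ s, g i ^ 2 ≤ 2 * ∑ i ∈ s, f i * g i) :
    ∑ i ∈ s, g i ^ 2 ≤ 4 * ∑ i ∈ s, f i ^ 2 := by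
  have hcs := sum_mul_sq_le_sq_mul_sq s f g
  have hG : 0 ≤ ∑ i ∈ s, g i ^ 2 := sum_nonneg fun _ _ => sq_nonneg _
  have hF : 0 ≤ ∑ i ∈ s, f i ^ 2 := sum_nonneg fun _ _ => sq_nonneg _
  nlinarith [sq_nonneg (∑ i ∈ s, g i ^ 2 - 2 * ∑ i ∈ s, f i * g i)]

theorem discrete_hardy_general (a : ℕ → ℝ) (n : ℕ) :
    ∑ k ∈ Finset.Icc 1 n, (1 / (k : ℝ) ^ 2) * (∑ j ∈ Finset.Icc 1 k, a j) ^ 2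
      ≤ 4 * ∑ k ∈ Finset.Icc 1 n, (a k) ^ 2 := by
  have hsq : ∀ k : ℕ, (1 / (k : ℝ) ^ 2) * (∑ j ∈ Icc 1 k, a j) ^ 2 = partialAvg a k ^ 2 := by
    intro k
    rw [partialAvg, div_pow, one_div_mul_eq_div]
  simp only [hsq]
  exact sum_sq_le_four_mul_of_sum_sq_le_two_mul_sum_mul _ a _ (partialAvg.sum_sq_le a n)

/-- Discrete Hardy inequality (p = 2): for any nonnegative sequence `a` and any `n`,
`∑_{k=1}^n (1/k²) (∑_{j=1}^k a_j)² ≤ 4 ∑_{k=1}^n a_k²`. -/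
theorem discrete_hardy (a : ℕ → ℝ) (ha : ∀ k, 0 ≤ a k) (n : ℕ) :
    ∑ k ∈ Finset.Icc 1 n, (1 / (k : ℝ) ^ 2) * (∑ j ∈ Finset.Icc 1 k, a j) ^ 2
      ≤ 4 * ∑ k ∈ Finset.Icc 1 n, (a k) ^ 2 :=
  discrete_hardy_general a n
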